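/- arXiv:2408.13506 — 4 statements merged into one kernel-verified Lean document; each statement's English description precedes it below -/
import Mathlib

section
/- With node-normals N_{nc} as above and x_n the position of vertex n, for any simple polygon c one has ∑_{n vertex of c} N_{nc} ⊗ x_n = |c| · Id. -/
open scoped BigOperators

/-- Euclidean length of a plane vector. -/
noncomputable def elen (v : Fin 2 → ℝ) : ℝ := Real.sqrt (v 0 ^ 2 + v 1 ^ 2)

/-- Rotation of a plane vector by `-π/2`: `(a, b) ↦ (b, -a)`. -/
def perp (v : Fin 2 → ℝ) : Fin 2 → ℝ := ![v 1, -v 0]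

/-- For a simple polygon with vertices `x i`, edges `e i = x (i+1) - x i` of
lengths `|e i|` and outward unit normals `n i`, node-normals
`N i = (|e (i-1)| • n (i-1) + |e i| • n i)/2`, and area `A` given by the
shoelace formula, one has `∑ i, N i ⊗ x i = A • Id`. -/
theorem node_normals_tensor_vertices (k : ℕ) [NeZero k]
    (x : ZMod k → Fin 2 → ℝ)
    (e : ZMod k → Fin 2 → ℝ)
    (he : ∀ i, e i = x (i + 1) - x i)
    (hne : ∀ i, e i ≠ 0)
    (n : ZMod k → Fin 2 → ℝ)
    (hn : ∀ i, n i = (elen (e i))⁻¹ • perp (e i))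
    (Nn : ZMod k → Fin 2 → ℝ)
    (hN : ∀ i, Nn i = (elen (e (i - 1)) / 2) • n (i - 1) + (elen (e i) / 2) • n i)
    (A : ℝ)
    (hA : A = (1 / 2) * ∑ i, (x i 0 * x (i + 1) 1 - x i 1 * x (i + 1) 0)) :
    ∑ i, Matrix.vecMulVec (Nn i) (x i) = A • (1 : Matrix (Fin 2) (Fin 2) ℝ) := by
  have elen_ne : ∀ i, elen (e i) ≠ 0 := by
    intro i
    have h := hne i
    have hcoord : e i 0 ≠ 0 ∨ e i 1 ≠ 0 := by
      by_contra hc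
      push_neg at hc
      apply h
      funext j
      fin_cases j
      · exact hc.1
      · exact hc.2
    unfold elen
    rw [Real.sqrt_ne_zero']
    rcases hcoord with h0 | h1
    · positivity
    · positivity
  have hN' : ∀ i j, Nn i j = (1/2 : ℝ) * (perp (e (i-1)) j + perp (e i) j) := by
    intro i j
    rw [hN, hn, hn, smul_smul, smul_smul]
    have h1 : elen (e (i-1)) / 2 * (elen (e (i-1)))⁻¹ = 1/2 := by
      rw [div_mul_eq_mul_div, mul_inv_cancel₀ (elen_ne (i-1))]
    have h2 : elen (e i) / 2 * (elen (e i))⁻¹ = 1/2 := by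
      rw [div_mul_eq_mul_div, mul_inv_cancel₀ (elen_ne i)]
    rw [h1, h2]
    simp [Pi.add_apply, Pi.smul_apply, smul_eq_mul]
    ring
  have shift : ∀ f : ZMod k → ℝ, ∑ i, f (i+1) = ∑ i, f i :=
    fun f => Fintype.sum_equiv (Equiv.addRight 1) _ _ (fun i => rfl)
  have tel : ∀ h : ZMod k → ℝ, ∑ i, (h (i+1) - h i) = 0 := by
    intro h
    rw [Finset.sum_sub_distrib, shift h, sub_self]
  have shiftback : ∀ f : ZMod k → ZMod k → ℝ, ∑ i, f (i-1) i = ∑ i, f i (i+1) := by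
    intro f
    have := shift (fun i => f (i-1) i)
    simpa using this.symm
  have main : ∀ p q : Fin 2, ∑ i, Nn i p * x i q
      = (1/2 : ℝ) * ∑ i, perp (e i) p * (x (i+1) q + x i q) := by
    intro p q
    calc ∑ i, Nn i p * x i q
        = ∑ i, ((1/2 : ℝ)*(perp (e (i-1)) p * x i q) + (1/2 : ℝ)*(perp (e i) p * x i q)) :=
          Finset.sum_congr rfl (fun i _ => by rw [hN']; ring)
      _ = ∑ i, (1/2 : ℝ)*(perp (e (i-1)) p * x i q) + ∑ i, (1/2 : ℝ)*(perp (e i) p * x i q) :=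
          Finset.sum_add_distrib
      _ = ∑ i, (1/2 : ℝ)*(perp (e i) p * x (i+1) q) + ∑ i, (1/2 : ℝ)*(perp (e i) p * x i q) := by
          rw [shiftback (fun a b => (1/2 : ℝ)*(perp (e a) p * x b q))]
      _ = (1/2 : ℝ) * ∑ i, perp (e i) p * (x (i+1) q + x i q) := by
          rw [Finset.mul_sum, ← Finset.sum_add_distrib]
          exact Finset.sum_congr rfl (fun i _ => by ring)
  have E00 : ∑ i, Nn i 0 * x i 0 = A := by
    rw [main, hA]
    congr 1
    rw [show (∑ i, perp (e i) 0 * (x (i+1) 0 + x i 0))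
        = ∑ i, ((x i 0 * x (i+1) 1 - x i 1 * x (i+1) 0)
            + ((x (i+1) 0 * x (i+1) 1) - (x i 0 * x i 1))) from
      Finset.sum_congr rfl (fun i _ => by
        simp only [perp, Matrix.cons_val_zero, Matrix.cons_val_one, Matrix.head_cons,
          he, Pi.sub_apply]
        ring)]
    rw [Finset.sum_add_distrib, tel (fun i => x i 0 * x i 1), add_zero]
  have E01 : ∑ i, Nn i 0 * x i 1 = 0 := by
    rw [main]
    rw [show (∑ i, perp (e i) 0 * (x (i+1) 1 + x i 1))
        = ∑ i, ((x (i+1) 1)^2 - (x i 1)^2) from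
      Finset.sum_congr rfl (fun i _ => by
        simp only [perp, Matrix.cons_val_zero, Matrix.cons_val_one, Matrix.head_cons,
          he, Pi.sub_apply]
        ring)]
    rw [tel (fun i => (x i 1)^2), mul_zero]
  have E10 : ∑ i, Nn i 1 * x i 0 = 0 := by
    rw [main]
    rw [show (∑ i, perp (e i) 1 * (x (i+1) 0 + x i 0))
        = ∑ i, ((-((x (i+1) 0)^2)) - (-((x i 0)^2))) from
      Finset.sum_congr rfl (fun i _ => by
        simp only [perp, Matrix.cons_val_zero, Matrix.cons_val_one, Matrix.head_cons,
          he, Pi.sub_apply]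
        ring)]
    rw [tel (fun i => -((x i 0)^2)), mul_zero]
  have E11 : ∑ i, Nn i 1 * x i 1 = A := by
    rw [main, hA]
    congr 1
    rw [show (∑ i, perp (e i) 1 * (x (i+1) 1 + x i 1))
        = ∑ i, ((x i 0 * x (i+1) 1 - x i 1 * x (i+1) 0)
            + ((-(x (i+1) 0 * x (i+1) 1)) - (-(x i 0 * x i 1)))) from
      Finset.sum_congr rfl (fun i _ => by
        simp only [perp, Matrix.cons_val_zero, Matrix.cons_val_one, Matrix.head_cons,
          he, Pi.sub_apply]
        ring)]
    rw [Finset.sum_add_distrib, tel (fun i => -(x i 0 * x i 1)), add_zero]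
  ext p q
  rw [Matrix.sum_apply]
  simp only [Matrix.vecMulVec_apply, Matrix.smul_apply, Matrix.one_apply, smul_eq_mul]
  fin_cases p <;> fin_cases q <;>
    simp only [Fin.mk_zero, Fin.mk_one, Fin.isValue] <;>
    simp [E00, E01, E10, E11]
end

section
/- For a triangle or quadrilateral c, if vertices n and m share an edge and are ordered counterclockwise along the boundary of c, then the area of c satisfies |c| = 2 · (N_{nc} × N_{mc}), where × denotes the scalar cross product of two plane vectors (a × b = a_1 b_2 - a_2 b_1). -/
open scoped BigOperators

/-- For a counterclockwise-oriented triangle or quadrilateral with node-normals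
`N i` (half the sum of the length-weighted outward normals of the two adjacent
edges), any two vertices `i`, `i+1` sharing an edge and ordered counterclockwise
satisfy `|c| = 2 (N i × N (i+1))`, where `a × b = a₀b₁ - a₁b₀` and `|c| = A`
is the area of the cell. -/
theorem area_eq_twice_cross_of_node_normals (k : ℕ) [NeZero k]
    (hk : k = 3 ∨ k = 4)
    (x : ZMod k → Fin 2 → ℝ)
    (e : ZMod k → Fin 2 → ℝ)
    (he : ∀ i, e i = x (i + 1) - x i)
    (hne : ∀ i, e i ≠ 0)
    (n : ZMod k → Fin 2 → ℝ)
    (hn : ∀ i, n i = (elen (e i))⁻¹ • perp (e i))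
    (Nn : ZMod k → Fin 2 → ℝ)
    (hN : ∀ i, Nn i = (elen (e (i - 1)) / 2) • n (i - 1) + (elen (e i) / 2) • n i)
    (A : ℝ)
    (hA : A = (1 / 2) * ∑ i, (x i 0 * x (i + 1) 1 - x i 1 * x (i + 1) 0))
    (hccw : 0 < A) :
    ∀ i, A = 2 * (Nn i 0 * Nn (i + 1) 1 - Nn i 1 * Nn (i + 1) 0) := by
  have helen : ∀ i, elen (e i) ≠ 0 := by
    intro i h
    apply hne i
    have hnn : (0:ℝ) ≤ e i 0 ^ 2 + e i 1 ^ 2 := by positivity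
    have h2 : e i 0 ^ 2 + e i 1 ^ 2 = 0 := by
      have := (Real.sqrt_eq_zero hnn).mp h
      exact this
    have h0 : e i 0 = 0 := by nlinarith [sq_nonneg (e i 0), sq_nonneg (e i 1)]
    have h1 : e i 1 = 0 := by nlinarith [sq_nonneg (e i 0), sq_nonneg (e i 1)]
    funext j
    fin_cases j <;> simpa [h0, h1]
  have hN0 : ∀ i, Nn i 0 = (e (i-1) 1 + e i 1)/2 := by
    intro i
    rw [hN, hn, hn]
    simp [perp]
    field_simp [helen (i-1), helen i]
  have hN1 : ∀ i, Nn i 1 = -((e (i-1) 0 + e i 0)/2) := by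
    intro i
    rw [hN, hn, hn]
    simp [perp]
    field_simp [helen (i-1), helen i]
    ring
  rename_i inst
  rcases hk with rfl | rfl
  · have hinst : inst = (⟨by norm_num⟩ : NeZero 3) := Subsingleton.elim _ _
    subst hinst
    intro i
    have huniv : (Finset.univ : Finset (ZMod 3)) = {0,1,2} := by decide
    rw [huniv, Finset.sum_insert (by decide), Finset.sum_insert (by decide),
      Finset.sum_singleton] at hA
    rw [hN0, hN1, hN0, hN1]
    simp only [he]
    rcases (by decide : ∀ j : ZMod 3, j = 0 ∨ j = 1 ∨ j = 2) i with rfl | rfl | rfl <;>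
      simp only [show ((0:ZMod 3)-1) = 2 from by decide, show ((1:ZMod 3)-1) = 0 from by decide,
        show ((2:ZMod 3)-1) = 1 from by decide, show ((0:ZMod 3)+1) = 1 from by decide,
        show ((1:ZMod 3)+1) = 2 from by decide, show ((2:ZMod 3)+1) = 0 from by decide,
        Pi.sub_apply] at hA ⊢ <;>
      rw [hA] <;> ring
  · have hinst : inst = (⟨by norm_num⟩ : NeZero 4) := Subsingleton.elim _ _
    subst hinst
    intro i
    have huniv : (Finset.univ : Finset (ZMod 4)) = {0,1,2,3} := by decide
    rw [huniv, Finset.sum_insert (by decide), Finset.sum_insert (by decide),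
      Finset.sum_insert (by decide), Finset.sum_singleton] at hA
    rw [hN0, hN1, hN0, hN1]
    simp only [he]
    rcases (by decide : ∀ j : ZMod 4, j = 0 ∨ j = 1 ∨ j = 2 ∨ j = 3) i with rfl | rfl | rfl | rfl <;>
      simp only [show ((0:ZMod 4)-1) = 3 from by decide, show ((1:ZMod 4)-1) = 0 from by decide,
        show ((2:ZMod 4)-1) = 1 from by decide, show ((3:ZMod 4)-1) = 2 from by decide,
        show ((0:ZMod 4)+1) = 1 from by decide,
        show ((1:ZMod 4)+1) = 2 from by decide, show ((2:ZMod 4)+1) = 3 from by decide,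
        show ((3:ZMod 4)+1) = 0 from by decide, Pi.sub_apply] at hA ⊢ <;>
      rw [hA] <;> ring
end

section
/- (Discrete vorticity preservation on Cartesian grids) For the semi-discrete scheme d/dt u_{ij} = -(1/(2Δx)) ( (p*_{i+½,j+½} - p*_{i-½,j+½}) + (p*_{i+½,j-½} - p*_{i-½,j-½}) ), d/dt v_{ij} = -(1/(2Δy)) ( (p*_{i+½,j+½} - p*_{i+½,j-½}) + (p*_{i-½,j+½} - p*_{i-½,j-½}) ), for ANY node values p*, the discrete vorticity ω_{i+½,j+½} := (u_{i,j+1} + u_{i+1,j+1} - u_{ij} - u_{i+1,j})/(2Δy) - (v_{i+1,j} + v_{i+1,j+1} - v_{ij} - v_{i,j+1})/(2Δx) satisfies d/dt ω_{i+½,j+½} = 0 at every node. -/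
/-!
The discrete vorticity is linear in the velocity field, so its time derivative is the discrete
vorticity of the right-hand side `-(∇ₓp*, ∇ᵧp*)`. Writing `δ` for a one-sided difference and
`μ` for a two-point average, the gradient is `(δₓμᵧ p*, δᵧμₓ p*)` and the vorticity is
`μₓδᵧ u - μᵧδₓ v` (up to the factors `1/(2Δ)`); these operators commute, so the vorticity of
any discrete gradient vanishes identically.
-/

namespace CartesianGrid

noncomputable section

/-- The node `(i+½, j+½)` carries the index `(i, j)`, here and for the node values `p` below. -/
def vorticity (Δx Δy : ℝ) (u v : ℤ → ℤ → ℝ) (i j : ℤ) : ℝ :=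
  (u i (j + 1) + u (i + 1) (j + 1) - u i j - u (i + 1) j) / (2 * Δy)
    - (v (i + 1) j + v (i + 1) (j + 1) - v i j - v i (j + 1)) / (2 * Δx)

def gradX (Δx : ℝ) (p : ℤ → ℤ → ℝ) (i j : ℤ) : ℝ :=
  1 / (2 * Δx) * ((p i j - p (i - 1) j) + (p i (j - 1) - p (i - 1) (j - 1)))

def gradY (Δy : ℝ) (p : ℤ → ℤ → ℝ) (i j : ℤ) : ℝ :=
  1 / (2 * Δy) * ((p i j - p i (j - 1)) + (p (i - 1) j - p (i - 1) (j - 1)))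

theorem vorticity_neg (Δx Δy : ℝ) (u v : ℤ → ℤ → ℝ) (i j : ℤ) :
    vorticity Δx Δy (-u) (-v) i j = -vorticity Δx Δy u v i j := by
  simp only [vorticity, Pi.neg_apply]
  ring

theorem vorticity_grad (Δx Δy : ℝ) (p : ℤ → ℤ → ℝ) (i j : ℤ) :
    vorticity Δx Δy (gradX Δx p) (gradY Δy p) i j = 0 := by
  simp only [vorticity, gradX, gradY, add_sub_cancel_right]
  ring

theorem hasDerivAt_vorticity (Δx Δy : ℝ) {u v : ℝ → ℤ → ℤ → ℝ} {u' v' : ℤ → ℤ → ℝ} {t : ℝ}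
    (hu : ∀ i j, HasDerivAt (fun τ => u τ i j) (u' i j) t)
    (hv : ∀ i j, HasDerivAt (fun τ => v τ i j) (v' i j) t) (i j : ℤ) :
    HasDerivAt (fun τ => vorticity Δx Δy (u τ) (v τ) i j) (vorticity Δx Δy u' v' i j) t :=
  ((((hu i (j + 1)).add (hu (i + 1) (j + 1))).sub (hu i j)).sub (hu (i + 1) j)).div_const _
    |>.sub <|
  ((((hv (i + 1) j).add (hv (i + 1) (j + 1))).sub (hv i j)).sub (hv i (j + 1))).div_const _

end

end CartesianGrid

open CartesianGrid in
theorem discrete_vorticity_preserved_general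
    (Δx Δy : ℝ)
    (u v : ℝ → ℤ → ℤ → ℝ) (P : ℝ → ℤ → ℤ → ℝ)
    (hu : ∀ t i j, HasDerivAt (fun τ => u τ i j)
      (-(1 / (2 * Δx)) * ((P t i j - P t (i - 1) j) + (P t i (j - 1) - P t (i - 1) (j - 1)))) t)
    (hv : ∀ t i j, HasDerivAt (fun τ => v τ i j)
      (-(1 / (2 * Δy)) * ((P t i j - P t i (j - 1)) + (P t (i - 1) j - P t (i - 1) (j - 1)))) t) :
    ∀ t i j, HasDerivAt (fun τ =>
      (u τ i (j + 1) + u τ (i + 1) (j + 1) - u τ i j - u τ (i + 1) j) / (2 * Δy)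
        - (v τ (i + 1) j + v τ (i + 1) (j + 1) - v τ i j - v τ i (j + 1)) / (2 * Δx))
      0 t := by
  intro t i j
  have hu' : ∀ i j, HasDerivAt (fun τ => u τ i j) ((-gradX Δx (P t)) i j) t := fun i j => by
    simpa only [Pi.neg_apply, gradX, neg_mul] using hu t i j
  have hv' : ∀ i j, HasDerivAt (fun τ => v τ i j) ((-gradY Δy (P t)) i j) t := fun i j => by
    simpa only [Pi.neg_apply, gradY, neg_mul] using hv t i j
  have h := hasDerivAt_vorticity Δx Δy hu' hv' i j
  rwa [vorticity_neg, vorticity_grad, neg_zero] at h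

/-- Discrete vorticity preservation on Cartesian grids: for the semi-discrete
scheme
`d/dt u_{ij} = -(1/(2Δx)) ((p*_{i+½,j+½} - p*_{i-½,j+½}) + (p*_{i+½,j-½} - p*_{i-½,j-½}))`,
`d/dt v_{ij} = -(1/(2Δy)) ((p*_{i+½,j+½} - p*_{i+½,j-½}) + (p*_{i-½,j+½} - p*_{i-½,j-½}))`
(node `(i+½, j+½)` being indexed by `(i, j)`), for ANY node values `p*`, the
discrete vorticity
`ω_{i+½,j+½} = (u_{i,j+1} + u_{i+1,j+1} - u_{ij} - u_{i+1,j})/(2Δy)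
  - (v_{i+1,j} + v_{i+1,j+1} - v_{ij} - v_{i,j+1})/(2Δx)`
has vanishing time derivative at every node. -/
theorem discrete_vorticity_preserved
    (Δx Δy : ℝ) (hΔx : 0 < Δx) (hΔy : 0 < Δy)
    (u v : ℝ → ℤ → ℤ → ℝ) (P : ℝ → ℤ → ℤ → ℝ)
    (hu : ∀ t i j, HasDerivAt (fun τ => u τ i j)
      (-(1 / (2 * Δx)) * ((P t i j - P t (i - 1) j) + (P t i (j - 1) - P t (i - 1) (j - 1)))) t)
    (hv : ∀ t i j, HasDerivAt (fun τ => v τ i j)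
      (-(1 / (2 * Δy)) * ((P t i j - P t i (j - 1)) + (P t (i - 1) j - P t (i - 1) (j - 1)))) t) :
    ∀ t i j, HasDerivAt (fun τ =>
      (u τ i (j + 1) + u τ (i + 1) (j + 1) - u τ i j - u τ (i + 1) j) / (2 * Δy)
        - (v τ (i + 1) j + v τ (i + 1) (j + 1) - v τ i j - v τ i (j + 1)) / (2 * Δx))
      0 t :=
  discrete_vorticity_preserved_general Δx Δy u v P hu hv
end

section
/- (Gradient–curl annihilation on triangular–quadrangular meshes) Let (Gφ)_c = (1/|c|) ∑_{n∈N(c)} N_{nc} φ_n and (Cw)_n = -(1/|c_n|) ∑_{c∈C(n)} N_{nc} × w_c (with a × b = a_1 b_2 - a_2 b_1). Assume every cell has at most 4 edges, and the node-normals satisfy: (a) N_{nc} × N_{mc} = |c|/2 whenever n, m are counterclockwise-consecutive vertices of c, and (b) N_{mc} = -N_{nc} for opposite vertices of a quadrilateral c. Then C(Gφ) = 0 for every node function φ, i.e. the image of G is contained in the kernel of C. -/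
open scoped BigOperators

/-- Gradient–curl annihilation on triangular–quadrangular meshes: given a mesh
whose cells have 3 or 4 vertices (with cyclic successor map `next`), with
node-normals satisfying
(a) `N_{nc} × N_{mc} = |c|/2` for counterclockwise-consecutive vertices `n`, `m`
    of the cell `c`, and
(b) `N_{mc} = -N_{nc}` for opposite vertices of a quadrilateral `c`,
and with every (directed) edge of the mesh matched by its reversal in exactly
as many cells (interior-edge assumption), the node-centered curl
`(Cw)_n = -(1/|c_n|) ∑_{c∈C(n)} N_{nc} × w_c` annihilates the cell-centered
gradient `(Gφ)_c = (1/|c|) ∑_{m∈N(c)} φ_m N_{mc}`: `C(Gφ) = 0` for every `φ`. -/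
theorem curl_annihilates_gradient
    {C N : Type*} [Fintype C] [Fintype N] [DecidableEq C] [DecidableEq N]
    (a : C → ℝ) (an : N → ℝ)
    (ha : ∀ c, 0 < a c) (han : ∀ n, 0 < an n)
    (NC : C → Finset N) (CN : N → Finset C)
    (hinc : ∀ n c, n ∈ NC c ↔ c ∈ CN n)
    (hcard : ∀ c, (NC c).card = 3 ∨ (NC c).card = 4)
    (next : C → N → N)
    (hnextmem : ∀ c, ∀ n ∈ NC c, next c n ∈ NC c)
    (Nn : N → C → Fin 2 → ℝ)
    (hcross : ∀ c, ∀ n ∈ NC c,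
      Nn n c 0 * Nn (next c n) c 1 - Nn n c 1 * Nn (next c n) c 0 = a c / 2)
    (hopp : ∀ c, (NC c).card = 4 → ∀ n ∈ NC c,
      Nn (next c (next c n)) c = fun i => -(Nn n c i))
    (hcyc : ∀ c, ∀ n ∈ NC c, ∀ m ∈ NC c,
      m = n ∨ m = next c n ∨ n = next c m ∨ ((NC c).card = 4 ∧ m = next c (next c n)))
    (hedge : ∀ n m : N, n ≠ m →
      (Finset.univ.filter fun c => n ∈ NC c ∧ m = next c n).card
        = (Finset.univ.filter fun c => m ∈ NC c ∧ n = next c m).card)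
    (φ : N → ℝ) (n : N) :
    -(an n)⁻¹ * ∑ c ∈ CN n,
        (Nn n c 0 * ((a c)⁻¹ * ∑ m ∈ NC c, φ m * Nn m c 1)
          - Nn n c 1 * ((a c)⁻¹ * ∑ m ∈ NC c, φ m * Nn m c 0)) = 0 := by
  -- Step 1: rewrite each cell's contribution as a sum of cross products.
  have hLHS : ∀ c ∈ CN n,
      (Nn n c 0 * ((a c)⁻¹ * ∑ m ∈ NC c, φ m * Nn m c 1)
        - Nn n c 1 * ((a c)⁻¹ * ∑ m ∈ NC c, φ m * Nn m c 0))
      = ∑ m ∈ NC c, φ m * (Nn n c 0 * Nn m c 1 - Nn n c 1 * Nn m c 0) / a c := by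
    intro c hc
    rw [Finset.mul_sum, Finset.mul_sum, Finset.mul_sum, Finset.mul_sum,
      ← Finset.sum_sub_distrib]
    refine Finset.sum_congr rfl fun m hm => ?_
    have hac : a c ≠ 0 := ne_of_gt (ha c)
    field_simp
  rw [Finset.sum_congr rfl hLHS]
  suffices h : ∑ c ∈ CN n, ∑ m ∈ NC c,
      φ m * (Nn n c 0 * Nn m c 1 - Nn n c 1 * Nn m c 0) / a c = 0 by
    rw [h]; ring
  -- Step 2: pointwise identity for each pair (c, m).
  have key : ∀ c ∈ CN n, ∀ m ∈ NC c,
      φ m * (Nn n c 0 * Nn m c 1 - Nn n c 1 * Nn m c 0) / a c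
      = (if m = next c n then φ m / 2 else 0)
        + (if n = next c m then -(φ m / 2) else 0) := by
    intro c hc m hm
    have hn : n ∈ NC c := (hinc n c).mpr hc
    have hac : (0:ℝ) < a c := ha c
    have hac' : a c ≠ 0 := ne_of_gt hac
    rcases hcyc c n hn m hm with h1 | h2 | h3 | ⟨h4, h5⟩
    · -- m = n
      subst h1
      have hne : ¬ m = next c m := by
        intro h
        have hx := hcross c m hm
        rw [← h] at hx
        nlinarith
      rw [if_neg hne, if_neg hne]
      ring
    · -- m = next c n
      have hc1 := hcross c n hn
      rw [← h2] at hc1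
      have hne2 : ¬ n = next c m := by
        intro h
        have hc2 := hcross c m hm
        rw [← h] at hc2
        nlinarith
      rw [if_pos h2, if_neg hne2, hc1]
      field_simp
      ring
    · -- n = next c m
      have hc2 := hcross c m hm
      rw [← h3] at hc2
      have hne1 : ¬ m = next c n := by
        intro h
        have hc1 := hcross c n hn
        rw [← h] at hc1
        nlinarith
      rw [if_neg hne1, if_pos h3]
      have hcr : Nn n c 0 * Nn m c 1 - Nn n c 1 * Nn m c 0 = -(a c / 2) := by
        linarith
      rw [hcr]
      field_simp
      ring
    · -- opposite vertices
      have hopp' := hopp c h4 n hn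
      rw [← h5] at hopp'
      have h0 : Nn m c 0 = -(Nn n c 0) := by rw [hopp']
      have h1' : Nn m c 1 = -(Nn n c 1) := by rw [hopp']
      have hcr : Nn n c 0 * Nn m c 1 - Nn n c 1 * Nn m c 0 = 0 := by
        rw [h0, h1']; ring
      have hne1 : ¬ m = next c n := by
        intro h
        have hc1 := hcross c n hn
        rw [← h] at hc1
        rw [hcr] at hc1
        linarith
      have hne2 : ¬ n = next c m := by
        intro h
        have hc2 := hcross c m hm
        rw [← h] at hc2
        have : Nn m c 0 * Nn n c 1 - Nn m c 1 * Nn n c 0 = 0 := by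
          rw [h0, h1']; ring
        linarith
      rw [if_neg hne1, if_neg hne2, hcr]
      ring
  have hsum := Finset.sum_congr rfl fun c hc =>
    Finset.sum_congr rfl (key c hc)
  rw [hsum]
  rw [Finset.sum_congr rfl (fun c hc => Finset.sum_add_distrib)]
  rw [Finset.sum_add_distrib]
  -- Step 3: evaluate both double sums as weighted counts over nodes.
  have hn' : ∀ c ∈ CN n, n ∈ NC c := fun c hc => (hinc n c).mpr hc
  -- first double sum
  have e1 : ∀ c ∈ CN n,
      (∑ m ∈ NC c, if m = next c n then φ m / 2 else 0)
      = ∑ m : N, if m = next c n ∧ n ∈ NC c then φ m / 2 else 0 := by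
    intro c hc
    rw [← Finset.sum_filter, ← Finset.sum_filter]
    congr 1
    ext m
    simp only [Finset.mem_filter, Finset.mem_univ, true_and]
    constructor
    · rintro ⟨hmem, h⟩; exact ⟨h, hn' c hc⟩
    · rintro ⟨h, hnn⟩; exact ⟨h ▸ hnextmem c n hnn, h⟩
  have e2 : ∀ c ∈ CN n,
      (∑ m ∈ NC c, if n = next c m then -(φ m / 2) else 0)
      = ∑ m : N, if m ∈ NC c ∧ n = next c m then -(φ m / 2) else 0 := by
    intro c hc
    rw [← Finset.sum_filter, ← Finset.sum_filter]
    congr 1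
    ext m
    simp only [Finset.mem_filter, Finset.mem_univ, true_and]
  rw [Finset.sum_congr rfl e1, Finset.sum_congr rfl e2,
    Finset.sum_comm, Finset.sum_comm (s := CN n)]
  have c1 : ∀ m : N,
      (∑ c ∈ CN n, if m = next c n ∧ n ∈ NC c then φ m / 2 else 0)
      = ((Finset.univ.filter fun c => n ∈ NC c ∧ m = next c n).card : ℝ) * (φ m / 2) := by
    intro m
    have hset : (CN n).filter (fun c => m = next c n ∧ n ∈ NC c)
        = Finset.univ.filter fun c => n ∈ NC c ∧ m = next c n := by
      ext c
      simp only [Finset.mem_filter, Finset.mem_univ, true_and]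
      constructor
      · rintro ⟨hcm, h1, h2⟩; exact ⟨h2, h1⟩
      · rintro ⟨h2, h1⟩; exact ⟨(hinc n c).mp h2, h1, h2⟩
    rw [← Finset.sum_filter, hset, Finset.sum_const, nsmul_eq_mul]
  have c2 : ∀ m : N,
      (∑ c ∈ CN n, if m ∈ NC c ∧ n = next c m then -(φ m / 2) else 0)
      = ((Finset.univ.filter fun c => m ∈ NC c ∧ n = next c m).card : ℝ) * (-(φ m / 2)) := by
    intro m
    have hset : (CN n).filter (fun c => m ∈ NC c ∧ n = next c m)
        = Finset.univ.filter fun c => m ∈ NC c ∧ n = next c m := by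
      ext c
      simp only [Finset.mem_filter, Finset.mem_univ, true_and]
      constructor
      · rintro ⟨hcm, h⟩; exact h
      · rintro ⟨h1, h2⟩
        exact ⟨(hinc n c).mp (h2 ▸ hnextmem c m h1), h1, h2⟩
    rw [← Finset.sum_filter, hset, Finset.sum_const, nsmul_eq_mul]
  rw [Finset.sum_congr rfl fun m _ => c1 m, Finset.sum_congr rfl fun m _ => c2 m,
    ← Finset.sum_add_distrib]
  apply Finset.sum_eq_zero
  intro m _
  have hAB : (Finset.univ.filter fun c => n ∈ NC c ∧ m = next c n).card
      = (Finset.univ.filter fun c => m ∈ NC c ∧ n = next c m).card := by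
    by_cases hmn : n = m
    · subst hmn; rfl
    · exact hedge n m hmn
  rw [hAB]; ring
end
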